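/- Let K = Σ_n (n − 1/2)² :ψ_{−n}ψ*_n: be the fermionic cut-and-join operator. For integers k, m and a rational number γ with 2mγ ∈ ℤ, conjugation gives q^{γK} V^{(k)}_m q^{−γK} = V^{(k − 2mγ)}_m. -/

import Mathlib

open scoped Classical

/-- A partition: a weakly decreasing, finitely supported sequence of naturals. -/
def Ptn : Type := {f : ℕ → ℕ // Antitone f ∧ (Function.support f).Finite}

/-- The weight |μ| of a partition. -/
noncomputable def wtP (μ : Ptn) : ℕ := ∑ᶠ i, μ.1 i

/-- The second Casimir κ(μ) = Σ μ_i (μ_i - 2i + 1) (0-indexed form). -/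
noncomputable def kappaZ (f : ℕ → ℕ) : ℤ :=
  ∑ᶠ i : ℕ, (f i : ℤ) * ((f i : ℤ) - 2 * (i : ℤ) - 1)

/-- The charge-0 sector of the fermionic Fock space: the free module on partitions. -/
abbrev Fock (R : Type) [Semiring R] := Ptn →₀ R

/-- The set of occupied fermion (ψ) indices of the state |μ⟩ : D(μ) = {i − μ_{i+1} : i ∈ ℕ}. -/
def Dset (μ : Ptn) : Set ℤ := Set.range fun i : ℕ => (i : ℤ) - (μ.1 i : ℤ)

/-- The fermionic sign produced by ψ_a ψ*_b acting on the Maya diagram of l. -/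
noncomputable def moveCoeff (l : Ptn) (a b : ℤ) : ℤ :=
  (-1) ^ (Nat.card {d : ℤ | d ∈ Dset l ∧ d < -b} + Nat.card {d : ℤ | d ∈ Dset l \ {-b} ∧ d < a})

/-- The operator ψ_a ψ*_b on the charge-0 Fock space: it removes the particle at
index −b and creates one at index a, with the appropriate fermionic sign. -/
noncomputable def psiPsiStar (R : Type) [Field R] (a b : ℤ) : Fock R →ₗ[R] Fock R :=
  Finsupp.lift (Fock R) R Ptn fun l =>
    if h : (-b) ∈ Dset l ∧ a ∉ Dset l \ {-b} ∧ ∃ m : Ptn, Dset m = insert a (Dset l \ {-b})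
    then (moveCoeff l a b : R) • Finsupp.single h.2.2.choose (1 : R)
    else 0

/-- The normally ordered product :ψ_a ψ*_b: = ψ_a ψ*_b − ⟨0|ψ_a ψ*_b|0⟩. -/
noncomputable def nord (R : Type) [Field R] (a b : ℤ) : Fock R →ₗ[R] Fock R :=
  psiPsiStar R a b - (if a + b = 0 ∧ b ≤ 0 then (1 : R) else 0) • LinearMap.id

/-- The U(1) current mode J_m = Σ_n :ψ_{m−n} ψ*_n:. -/
noncomputable def Jop (R : Type) [Field R] (m : ℤ) : Fock R →ₗ[R] Fock R :=
  Finsupp.lift (Fock R) R Ptn fun l => ∑ᶠ n : ℤ, nord R (m - n) n (Finsupp.single l 1)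

/-- The quantum-torus generator V^{(k)}_m = q^{−k(m+1)/2} Σ_n q^{kn} :ψ_{m−n}ψ*_n:
− (q^{k/2}/(1−q^k)) δ_{m,0}, with V^{(0)}_m = J_m; here v = q^{1/2}. -/
noncomputable def Vop (R : Type) [Field R] (v : R) (k m : ℤ) : Fock R →ₗ[R] Fock R :=
  if k = 0 then Jop R m else
  Finsupp.lift (Fock R) R Ptn fun l =>
    v ^ (-(k * (m + 1))) • (∑ᶠ n : ℤ, v ^ (2 * k * n) • nord R (m - n) n (Finsupp.single l 1))
      - (v ^ k / (1 - v ^ (2 * k))) • (if m = 0 then Finsupp.single l 1 else 0)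

/-- q^{γK} = exp(γ K log q) : the cut-and-join operator K = Σ_n (n−1/2)² :ψ_{−n}ψ*_n:
acts diagonally with eigenvalues κ(λ), so q^{γK}|λ⟩ = exp(2lγκ(λ))|λ⟩ where q = e^{2l}. -/
noncomputable def qgK (l : ℂ) (γ : ℚ) : Fock ℂ →ₗ[ℂ] Fock ℂ :=
  Finsupp.lift (Fock ℂ) ℂ Ptn fun lam =>
    Complex.exp (2 * l * (γ : ℂ) * (kappaZ lam.1 : ℂ)) • Finsupp.single lam (1 : ℂ)

/-
`q^{γK}` is diagonal in the partition basis, `|λ⟩ ↦ e^{2lγκ(λ)} |λ⟩`, and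
`ψ_a ψ*_b` sends `|λ⟩` to a multiple of a single basis vector `|μ⟩` whose Maya diagram is that of
`λ` with the particle at `-b` moved to `a`. Writing `κ(λ) = Σ_{d ∈ D(λ)} (d² + d) - Σ_i (i² + i)`
(over a large enough window), this move changes `κ` by `(a² + a) - (b² - b)`. Hence conjugation
rescales `:ψ_{m-n} ψ*_n:` by `exp(2lγ(m(m+1) - 2mn)) = v^{c(m+1)} v^{-2cn}` with `c = 2mγ`, which is
exactly the change of coefficients from `V^{(k)}_m` to `V^{(k-c)}_m`. For `m = 0` we have `c = 0`
and the constant term is untouched.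
-/

namespace Ptn

/-- The position `i - μ_i` of the `i`-th particle of the Maya diagram of `μ`. -/
def mayaPos (μ : Ptn) (i : ℕ) : ℤ := (i : ℤ) - (μ.1 i : ℤ)

theorem strictMono_mayaPos (μ : Ptn) : StrictMono μ.mayaPos := by
  intro i j hij
  have hμ : (μ.1 j : ℤ) ≤ (μ.1 i : ℤ) := by exact_mod_cast μ.2.1 hij.le
  simp only [mayaPos]
  omega

theorem range_mayaPos (μ : Ptn) : Set.range μ.mayaPos = Dset μ := rfl

theorem mayaPos_of_eq_zero {μ : Ptn} {i : ℕ} (hi : μ.1 i = 0) : μ.mayaPos i = i := by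
  simp [mayaPos, hi]

theorem exists_forall_ge_eq_zero (μ : Ptn) : ∃ N : ℕ, ∀ i, N ≤ i → μ.1 i = 0 := by
  obtain ⟨N, hN⟩ := μ.2.2.bddAbove
  refine ⟨N + 1, fun i hi => ?_⟩
  by_contra h
  have := hN (a := i) h
  omega

theorem coe_image_mayaPos_range {μ : Ptn} {N : ℕ} (hN : ∀ i, N ≤ i → μ.1 i = 0) :
    (((Finset.range N).image μ.mayaPos : Finset ℤ) : Set ℤ) = Dset μ ∩ Set.Iio (N : ℤ) := by
  have hpos_N : μ.mayaPos N = N := mayaPos_of_eq_zero (hN N le_rfl)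
  ext d
  simp only [Finset.coe_image, Finset.coe_range, Set.mem_image, Set.mem_Iio, ← range_mayaPos,
    Set.mem_inter_iff, Set.mem_range]
  constructor
  · rintro ⟨i, hi, rfl⟩
    exact ⟨⟨i, rfl⟩, hpos_N ▸ μ.strictMono_mayaPos hi⟩
  · rintro ⟨⟨i, rfl⟩, hlt⟩
    exact ⟨i, μ.strictMono_mayaPos.lt_iff_lt.1 (hpos_N ▸ hlt), rfl⟩

end Ptn

open Ptn

theorem Dset_injective : Function.Injective Dset := by
  intro μ ν h
  rw [← range_mayaPos, ← range_mayaPos, μ.strictMono_mayaPos.range_inj ν.strictMono_mayaPos] at h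
  exact Subtype.ext <| funext fun i => by simpa [mayaPos] using congrFun h i

theorem kappaZ_eq_sum_image_mayaPos {μ : Ptn} {N : ℕ} (hN : ∀ i, N ≤ i → μ.1 i = 0) :
    kappaZ μ.1 = ∑ d ∈ (Finset.range N).image μ.mayaPos, (d ^ 2 + d)
      - ∑ i ∈ Finset.range N, ((i : ℤ) ^ 2 + i) := by
  have hsupp : Function.support (fun i : ℕ => (μ.1 i : ℤ) * ((μ.1 i : ℤ) - 2 * (i : ℤ) - 1))
      ⊆ Finset.range N := by
    intro i hi
    by_contra hiN
    exact hi (by simp [hN i (by simpa using hiN)])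
  rw [kappaZ, finsum_eq_sum_of_support_subset _ hsupp,
    Finset.sum_image fun i _ j _ h => μ.strictMono_mayaPos.injective h, ← Finset.sum_sub_distrib]
  refine Finset.sum_congr rfl fun i _ => ?_
  simp only [mayaPos]
  ring

/-- The shift `(a² + a) - (b² - b) = (a + 1/2)² - (b - 1/2)²` is the `K`-weight of `ψ_a ψ*_b`. -/
theorem kappaZ_of_Dset_eq_insert_diff {lam ν : Ptn} {a b : ℤ} (hb : -b ∈ Dset lam)
    (ha : a ∉ Dset lam \ {-b}) (hD : Dset ν = insert a (Dset lam \ {-b})) :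
    kappaZ ν.1 = kappaZ lam.1 + (a ^ 2 + a) - (b ^ 2 - b) := by
  obtain ⟨N₁, hN₁⟩ := lam.exists_forall_ge_eq_zero
  obtain ⟨N₂, hN₂⟩ := ν.exists_forall_ge_eq_zero
  set N : ℕ := max (max N₁ N₂) (max (a + 1).toNat (1 - b).toNat)
  have hlam : ∀ i, N ≤ i → lam.1 i = 0 := fun i hi => hN₁ i (by omega)
  have hν : ∀ i, N ≤ i → ν.1 i = 0 := fun i hi => hN₂ i (by omega)
  have haN : a < N := by omega
  have hbN : -b < N := by omega
  set S := (Finset.range N).image lam.mayaPos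
  have hS : (S : Set ℤ) = Dset lam ∩ Set.Iio (N : ℤ) := coe_image_mayaPos_range hlam
  have hbS : -b ∈ S := by rw [← Finset.mem_coe, hS]; exact ⟨hb, hbN⟩
  have haS : a ∉ S.erase (-b) := by
    rw [← Finset.mem_coe, Finset.coe_erase, hS]
    exact fun h => ha ⟨h.1.1, h.2⟩
  have himage : (Finset.range N).image ν.mayaPos = insert a (S.erase (-b)) := by
    apply Finset.coe_injective
    rw [coe_image_mayaPos_range hν, hD, Finset.coe_insert, Finset.coe_erase, hS,
      Set.insert_inter_of_mem (Set.mem_Iio.2 haN), Set.sdiff_inter_right_comm]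
  rw [kappaZ_eq_sum_image_mayaPos hν, kappaZ_eq_sum_image_mayaPos hlam, himage,
    Finset.sum_insert haS, ← Finset.add_sum_erase _ _ hbS]
  ring

theorem Finsupp.lift_single_one {X R M : Type*} [Semiring R] [AddCommMonoid M] [Module R M]
    (f : X → M) (x : X) : Finsupp.lift M R X f (Finsupp.single x 1) = f x := by
  simp

theorem qgK_single (l : ℂ) (γ : ℚ) (lam : Ptn) :
    qgK l γ (Finsupp.single lam 1)
      = Complex.exp (2 * l * γ * kappaZ lam.1) • Finsupp.single lam 1 :=
  Finsupp.lift_single_one _ _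

theorem qgK_neg_comp_qgK (l : ℂ) (γ : ℚ) : qgK l (-γ) ∘ₗ qgK l γ = LinearMap.id := by
  refine Finsupp.lhom_ext' fun lam => LinearMap.ext_ring ?_
  simp only [LinearMap.comp_apply, Finsupp.lsingle_apply, LinearMap.id_apply, qgK_single,
    map_smul, smul_smul, ← Complex.exp_add]
  push_cast
  simp

theorem qgK_injective (l : ℂ) (γ : ℚ) : Function.Injective (qgK l γ) :=
  Function.LeftInverse.injective (g := qgK l (-γ)) (LinearMap.congr_fun (qgK_neg_comp_qgK l γ))

theorem qgK_finsum (l : ℂ) (γ : ℚ) {ι : Type*} (f : ι → Fock ℂ) :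
    qgK l γ (∑ᶠ i, f i) = ∑ᶠ i, qgK l γ (f i) :=
  (qgK l γ).toAddMonoidHom.map_finsum_of_injective (qgK_injective l γ) f

theorem qgK_psiPsiStar_single (l : ℂ) (γ : ℚ) (a b : ℤ) (lam : Ptn) :
    qgK l γ (psiPsiStar ℂ a b (Finsupp.single lam 1))
      = Complex.exp (2 * l * γ * (kappaZ lam.1 + (a ^ 2 + a) - (b ^ 2 - b) : ℤ)) •
        psiPsiStar ℂ a b (Finsupp.single lam 1) := by
  unfold psiPsiStar
  rw [Finsupp.lift_single_one]
  split_ifs with h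
  · rw [map_smul, qgK_single, smul_comm,
      kappaZ_of_Dset_eq_insert_diff h.1 h.2.1 h.2.2.choose_spec]
  · simp

theorem qgK_nord_single (l : ℂ) (γ : ℚ) (a b : ℤ) (lam : Ptn) :
    qgK l γ (nord ℂ a b (Finsupp.single lam 1))
      = Complex.exp (2 * l * γ * (kappaZ lam.1 + (a ^ 2 + a) - (b ^ 2 - b) : ℤ)) •
        nord ℂ a b (Finsupp.single lam 1) := by
  simp only [nord, LinearMap.sub_apply, LinearMap.smul_apply, LinearMap.id_apply, map_sub,
    map_smul, qgK_psiPsiStar_single, qgK_single, smul_sub]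
  congr 1
  split_ifs with hab
  · obtain rfl : a = -b := by omega
    have hshift : kappaZ lam.1 + ((-b) ^ 2 + -b) - (b ^ 2 - b) = kappaZ lam.1 := by ring
    rw [hshift, smul_comm]
  · simp

/-- For `k = 0` the constant term `v^k / (1 - v^{2k}) = 1 / 0` is `0` in Lean, so the general
formula also covers `V^{(0)}_m = J_m`. -/
theorem Vop_single (v : ℂ) (k m : ℤ) (lam : Ptn) :
    Vop ℂ v k m (Finsupp.single lam 1)
      = v ^ (-(k * (m + 1))) •
          (∑ᶠ n : ℤ, v ^ (2 * k * n) • nord ℂ (m - n) n (Finsupp.single lam 1))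
        - (v ^ k / (1 - v ^ (2 * k))) • (if m = 0 then Finsupp.single lam 1 else 0) := by
  by_cases hk : k = 0
  · subst hk
    simp [Vop, Jop]
  · rw [Vop, if_neg hk, Finsupp.lift_single_one]

theorem qgK_conj_Vop_single (l v : ℂ) (γ : ℚ) (k m : ℤ) (lam : Ptn) :
    qgK l γ (Vop ℂ v k m (qgK l (-γ) (Finsupp.single lam 1)))
      = ∑ᶠ n : ℤ, (v ^ (-(k * (m + 1))) * v ^ (2 * k * n) *
            Complex.exp (2 * l * γ * ((m - n) ^ 2 + (m - n) - (n ^ 2 - n) : ℤ))) •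
          nord ℂ (m - n) n (Finsupp.single lam 1)
        - (v ^ k / (1 - v ^ (2 * k))) • (if m = 0 then Finsupp.single lam 1 else 0) := by
  have hinv : Complex.exp (2 * l * ((-γ : ℚ) : ℂ) * kappaZ lam.1) *
      Complex.exp (2 * l * γ * kappaZ lam.1) = 1 := by
    rw [← Complex.exp_add]
    push_cast
    simp
  rw [qgK_single, map_smul, map_smul, Vop_single, map_sub, map_smul, map_smul, qgK_finsum,
    smul_sub, smul_finsum, smul_finsum]
  congr 1
  · refine finsum_congr fun n => ?_
    rw [map_smul, qgK_nord_single, smul_smul, smul_smul, smul_smul]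
    congr 1
    rw [add_sub_assoc, Int.cast_add, mul_add (2 * l * γ), Complex.exp_add]
    linear_combination v ^ (-(k * (m + 1))) * v ^ (2 * k * n) *
      Complex.exp (2 * l * γ * ((m - n) ^ 2 + (m - n) - (n ^ 2 - n) : ℤ)) * hinv
  · split_ifs
    · rw [qgK_single, smul_smul, smul_comm, smul_smul, ← mul_assoc, mul_comm (Complex.exp _), hinv,
        one_mul]
    · simp

theorem qK_conjugation_general (l v : ℂ) (hvl : v = Complex.exp l)
    (k m : ℤ) (γ : ℚ) (c : ℤ) (hc : (c : ℚ) = 2 * (m : ℚ) * γ) :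
    (qgK l γ) ∘ₗ (Vop ℂ v k m) ∘ₗ (qgK l (-γ)) = Vop ℂ v (k - c) m := by
  have hcC : (c : ℂ) = 2 * m * γ := by exact_mod_cast hc
  have hweight : ∀ n : ℤ, v ^ (-(k * (m + 1))) * v ^ (2 * k * n) *
      Complex.exp (2 * l * γ * ((m - n) ^ 2 + (m - n) - (n ^ 2 - n) : ℤ))
        = v ^ (-((k - c) * (m + 1))) * v ^ (2 * (k - c) * n) := fun n => by
    simp only [hvl, ← Complex.exp_int_mul, ← Complex.exp_add]
    congr 1
    push_cast
    linear_combination (2 * n - m - 1) * l * hcC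
  refine Finsupp.lhom_ext' fun lam => LinearMap.ext_ring ?_
  simp only [LinearMap.comp_apply, Finsupp.lsingle_apply]
  rw [qgK_conj_Vop_single, Vop_single, smul_finsum]
  congr 1
  · exact finsum_congr fun n => by rw [smul_smul, hweight]
  · obtain rfl | hm := eq_or_ne m 0
    · obtain rfl : c = 0 := by simpa using hc
      rw [sub_zero]
    · simp [hm]

/-- q^{γK} V^{(k)}_m q^{−γK} = V^{(k−2mγ)}_m for rational γ with 2mγ = c ∈ ℤ. -/
theorem qK_conjugation (l v q : ℂ) (hvl : v = Complex.exp l) (hq : q = v ^ 2)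
    (h1 : ‖q‖ < 1) (k m : ℤ) (γ : ℚ) (c : ℤ) (hc : (c : ℚ) = 2 * (m : ℚ) * γ) :
    (qgK l γ) ∘ₗ (Vop ℂ v k m) ∘ₗ (qgK l (-γ)) = Vop ℂ v (k - c) m :=
  qK_conjugation_general l v hvl k m γ c hc
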